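/- arXiv:1911.12696 — 3 statements merged into one kernel-verified Lean document; each statement's English description precedes it below -/
import Mathlib

section
/- For every real z > 0, one has 1/√(z + 1/2) ≤ Γ(z + 1/2)/Γ(z + 1) ≤ 1/√z. -/
open Real

lemma gamma_half_sq_le (x : ℝ) (hx : 0 < x) :
    Real.Gamma (x + 1/2) ^ 2 ≤ Real.Gamma x * Real.Gamma (x + 1) := by
  have hx1 : (0:ℝ) < x + 1 := by linarith
  have hxh : (0:ℝ) < x + 1/2 := by linarith
  have h := Real.convexOn_log_Gamma.2 (Set.mem_Ioi.mpr hx) (Set.mem_Ioi.mpr hx1)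
    (by norm_num : (0:ℝ) ≤ 1/2) (by norm_num : (0:ℝ) ≤ 1/2) (by norm_num)
  have heq : (1/2 : ℝ) • x + (1/2 : ℝ) • (x + 1) = x + 1/2 := by
    simp [smul_eq_mul]; ring
  rw [heq] at h
  simp only [Function.comp_apply, smul_eq_mul] at h
  have hΓx := Real.Gamma_pos_of_pos hx
  have hΓx1 := Real.Gamma_pos_of_pos hx1
  have hΓxh := Real.Gamma_pos_of_pos hxh
  have h2 : Real.log (Real.Gamma (x + 1/2) ^ 2) ≤ Real.log (Real.Gamma x * Real.Gamma (x + 1)) := by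
    rw [Real.log_pow, Real.log_mul (ne_of_gt hΓx) (ne_of_gt hΓx1)]
    push_cast
    linarith
  exact (Real.log_le_log_iff (by positivity) (by positivity)).mp h2

theorem wendel_gamma_ratio (z : ℝ) (hz : 0 < z) :
    1 / Real.sqrt (z + 1/2) ≤ Real.Gamma (z + 1/2) / Real.Gamma (z + 1) ∧
    Real.Gamma (z + 1/2) / Real.Gamma (z + 1) ≤ 1 / Real.sqrt z := by
  have hzh : (0:ℝ) < z + 1/2 := by linarith
  have hz1 : (0:ℝ) < z + 1 := by linarith
  have hΓz := Real.Gamma_pos_of_pos hz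
  have hΓzh := Real.Gamma_pos_of_pos hzh
  have hΓz1 := Real.Gamma_pos_of_pos hz1
  have hrec : Real.Gamma (z + 1) = z * Real.Gamma z := Real.Gamma_add_one (ne_of_gt hz)
  have hrec2 : Real.Gamma (z + 1/2 + 1) = (z + 1/2) * Real.Gamma (z + 1/2) :=
    Real.Gamma_add_one (ne_of_gt hzh)
  have hsz : 0 < Real.sqrt z := Real.sqrt_pos.mpr hz
  have hszh : 0 < Real.sqrt (z + 1/2) := Real.sqrt_pos.mpr hzh
  constructor
  · have h := gamma_half_sq_le (z + 1/2) hzh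
    have heq : z + 1/2 + 1/2 = z + 1 := by ring
    rw [heq, hrec2] at h
    have hsq : Real.Gamma (z+1) ≤ Real.sqrt (z + 1/2) * Real.Gamma (z + 1/2) := by
      have h2 : Real.Gamma (z+1)^2 ≤ (Real.sqrt (z+1/2) * Real.Gamma (z+1/2))^2 := by
        rw [mul_pow, Real.sq_sqrt (le_of_lt hzh)]
        nlinarith
      exact (pow_le_pow_iff_left₀ (le_of_lt hΓz1) (by positivity) two_ne_zero).mp h2
    rw [div_le_div_iff₀ hszh hΓz1]
    linarith [mul_comm (Real.sqrt (z+1/2)) (Real.Gamma (z+1/2))]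
  · have h := gamma_half_sq_le z hz
    have hsq : Real.sqrt z * Real.Gamma (z + 1/2) ≤ Real.Gamma (z+1) := by
      have h2 : (Real.sqrt z * Real.Gamma (z+1/2))^2 ≤ Real.Gamma (z+1)^2 := by
        rw [mul_pow, Real.sq_sqrt (le_of_lt hz)]
        nlinarith
      exact (pow_le_pow_iff_left₀ (by positivity) (le_of_lt hΓz1) two_ne_zero).mp h2
    rw [div_le_div_iff₀ hΓz1 hsz]
    linarith
end

section
/- If y : ℕ → ℝ is a sequence such that y(m)²/m → 0 as m → ∞ (and eventually y(m) < m), then (1 - y(m)/m)^m / e^{-y(m)} → 1 as m → ∞. -/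
/-! Writing `(1 - y/t)^t = exp (t log (1 - y/t))`, the bound `|log (1 - x) + x| ≤ 2x²` for
`|x| ≤ 1/2` shows that the exponent differs from `-y` by at most `2y²/t`, which tends to `0`. -/

open Real Filter

open scoped Topology

lemma abs_log_one_sub_add_le {x : ℝ} (hx : |x| ≤ 1 / 2) : |log (1 - x) + x| ≤ 2 * x ^ 2 := by
  have taylor := abs_log_sub_add_sum_range_le (hx.trans_lt (by norm_num)) 1
  simp only [Finset.range_one, Finset.sum_singleton, zero_add, pow_one, Nat.cast_zero,
    div_one] at taylor
  calc |log (1 - x) + x| = |x + log (1 - x)| := by rw [add_comm]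
    _ ≤ |x| ^ 2 / (1 - |x|) := taylor
    _ ≤ 2 * x ^ 2 := by
      rw [div_le_iff₀ (by linarith), sq_abs]
      nlinarith [sq_nonneg x]

section

variable {α : Type*} {l : Filter α} {t y : α → ℝ}

lemma tendsto_div_of_tendsto_sq_div (ht : Tendsto t l atTop)
    (hy : Tendsto (fun a => y a ^ 2 / t a) l (𝓝 0)) : Tendsto (fun a => y a / t a) l (𝓝 0) := by
  have hsq : Tendsto (fun a => (y a / t a) ^ 2) l (𝓝 0) := by
    have := hy.mul ht.inv_tendsto_atTop
    rw [zero_mul] at this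
    exact this.congr fun a => by simp only [Pi.inv_apply]; ring
  rw [tendsto_zero_iff_abs_tendsto_zero]
  simpa [Function.comp_def, sqrt_sq_eq_abs] using (continuous_sqrt.tendsto 0).comp hsq

lemma tendsto_mul_log_one_sub_div_add (ht : Tendsto t l atTop)
    (hy : Tendsto (fun a => y a ^ 2 / t a) l (𝓝 0)) :
    Tendsto (fun a => t a * log (1 - y a / t a) + y a) l (𝓝 0) := by
  have hsmall : ∀ᶠ a in l, |y a / t a| ≤ 1 / 2 :=
    (tendsto_div_of_tendsto_sq_div ht hy).abs.eventually (eventually_le_nhds (by norm_num))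
  refine squeeze_zero_norm' ?_ (by simpa using hy.const_mul 2)
  filter_upwards [hsmall, ht.eventually_gt_atTop 0] with a hxa hta
  calc ‖t a * log (1 - y a / t a) + y a‖ = ‖t a * (log (1 - y a / t a) + y a / t a)‖ := by
        rw [mul_add, mul_div_cancel₀ _ hta.ne']
    _ = t a * |log (1 - y a / t a) + y a / t a| := by
        rw [norm_mul, norm_eq_abs, norm_eq_abs, abs_of_pos hta]
    _ ≤ t a * (2 * (y a / t a) ^ 2) := by gcongr; exact abs_log_one_sub_add_le hxa
    _ = 2 * (y a ^ 2 / t a) := by field_simp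

theorem tendsto_one_sub_div_rpow_div_exp_neg (ht : Tendsto t l atTop)
    (hy : Tendsto (fun a => y a ^ 2 / t a) l (𝓝 0)) :
    Tendsto (fun a => (1 - y a / t a) ^ t a / exp (-y a)) l (𝓝 1) := by
  have hexp := (continuous_exp.tendsto 0).comp (tendsto_mul_log_one_sub_div_add ht hy)
  rw [exp_zero] at hexp
  have hbase : ∀ᶠ a in l, 0 < 1 - y a / t a :=
    (tendsto_div_of_tendsto_sq_div ht hy).eventually (eventually_lt_nhds one_pos) |>.mono
      fun _ h => sub_pos.2 h
  refine hexp.congr' ?_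
  filter_upwards [hbase] with a ha
  rw [Function.comp_apply, rpow_def_of_pos ha, ← exp_sub]
  ring_nf

end

theorem pow_div_exp_tendsto_one_general (y : ℕ → ℝ)
    (h : Tendsto (fun m : ℕ => (y m) ^ 2 / (m : ℝ)) atTop (nhds 0)) :
    Tendsto (fun m : ℕ => (1 - y m / (m : ℝ)) ^ (m : ℝ) / Real.exp (-(y m)))
      atTop (nhds 1) :=
  tendsto_one_sub_div_rpow_div_exp_neg tendsto_natCast_atTop_atTop h

theorem pow_div_exp_tendsto_one (y : ℕ → ℝ)
    (h : Tendsto (fun m : ℕ => (y m) ^ 2 / (m : ℝ)) atTop (nhds 0))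
    (h' : ∀ᶠ m : ℕ in atTop, y m < (m : ℝ)) :
    Tendsto (fun m : ℕ => (1 - y m / (m : ℝ)) ^ (m : ℝ) / Real.exp (-(y m)))
      atTop (nhds 1) :=
  pow_div_exp_tendsto_one_general y h
end

section
/- For every real z > 0 and every h ∈ (0,1): 1 - (1-h²)/(2h²(z+1)) ≤ h·(1 - F_{z-1}(h)) / (c_z · (1-h²)^z) ≤ 1. -/
open Real MeasureTheory Set

/-! Write `J(h) = ∫_h^1 (1 - s²)^(z-1) ds`. Since
`d/ds (-(1 - s²)^z / s) = 2z (1 - s²)^(z-1) + (1 - s²)^z / s²`, we get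
`2z J(h) = (1 - h²)^z / h - M(h)` with `M(h) = ∫_h^1 (1 - s²)^z / s² ds ≥ 0`, and bounding
`1 / s² ≤ s / h³` on `[h, 1]` gives `M(h) ≤ (1 - h²)^(z+1) / (2(z+1)h³)`. The normalization
`F_{z-1}(1) = 1` is a beta integral combined with Legendre's duplication formula, so that
`1 - F_{z-1}(h) = 2z c_z J(h)`. -/

theorem intervalIntegrable_one_sub_sq_rpow {p : ℝ} (hp : -1 < p) {a b : ℝ}
    (ha : a ∈ Icc (-1 : ℝ) 1) (hb : b ∈ Icc (-1 : ℝ) 1) :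
    IntervalIntegrable (fun s : ℝ => (1 - s ^ 2) ^ p) volume a b := by
  have hright : IntervalIntegrable (fun s : ℝ => (1 - s ^ 2) ^ p) volume 0 1 := by
    have hsing : IntervalIntegrable (fun s : ℝ => (1 - s) ^ p) volume 0 1 := by
      simpa using (intervalIntegral.intervalIntegrable_rpow' (a := 1) (b := 0) hp).comp_sub_left 1
    refine (hsing.continuousOn_mul (g := fun s : ℝ => (1 + s) ^ p) ?_).congr fun s hs => ?_
    · refine ContinuousOn.rpow_const (by fun_prop) fun x hx => Or.inl ?_
      rw [uIcc_of_le zero_le_one] at hx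
      linarith [hx.1]
    · rw [uIoc_of_le zero_le_one] at hs
      rw [← mul_rpow (by linarith [hs.1]) (by linarith [hs.2])]
      ring_nf
  have hleft : IntervalIntegrable (fun s : ℝ => (1 - s ^ 2) ^ p) volume (-1) 0 := by
    simpa using
      ((IntervalIntegrable.iff_comp_neg (f := fun s : ℝ => (1 - s ^ 2) ^ p)).mp hright).symm
  refine (hleft.trans hright).mono_set ?_
  rw [uIcc_of_le (by norm_num : (-1 : ℝ) ≤ 1)]
  exact uIcc_subset_Icc ha hb

theorem integral_rpow_mul_one_sub_rpow_eq_Gamma {a b : ℝ} (ha : 0 < a) (hb : 0 < b) :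
    ∫ x in (0:ℝ)..1, x ^ (a - 1) * (1 - x) ^ (b - 1) = Gamma a * Gamma b / Gamma (a + b) := by
  have hcast : ((∫ x in (0:ℝ)..1, x ^ (a - 1) * (1 - x) ^ (b - 1) : ℝ) : ℂ)
      = Complex.betaIntegral a b := by
    rw [← intervalIntegral.integral_ofReal]
    refine intervalIntegral.integral_congr fun x hx => ?_
    rw [uIcc_of_le zero_le_one] at hx
    simp only [Complex.ofReal_mul, Complex.ofReal_cpow hx.1,
      Complex.ofReal_cpow (sub_nonneg.2 hx.2)]
    push_cast
    rfl
  have hbeta := Complex.betaIntegral_eq_Gamma_mul_div a b (by simpa) (by simpa)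
  rw [← hcast, ← Complex.ofReal_add, Complex.Gamma_ofReal, Complex.Gamma_ofReal,
    Complex.Gamma_ofReal] at hbeta
  exact_mod_cast hbeta

theorem integral_one_sub_sq_rpow {z : ℝ} (hz : 0 < z) :
    ∫ s in (-1 : ℝ)..1, (1 - s ^ 2) ^ (z - 1) = √π * Gamma z / Gamma (z + 1 / 2) := by
  have hsubst : ∫ s in (-1 : ℝ)..1, (1 - s ^ 2) ^ (z - 1)
      = 2 * ∫ x in (0 : ℝ)..1, (1 - (2 * x - 1) ^ 2) ^ (z - 1) := by
    rw [intervalIntegral.integral_comp_mul_sub (fun s => (1 - s ^ 2) ^ (z - 1)) two_ne_zero]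
    norm_num
    ring
  have hfactor : ∫ x in (0 : ℝ)..1, (1 - (2 * x - 1) ^ 2) ^ (z - 1)
      = 2 ^ (2 * (z - 1)) * ∫ x in (0 : ℝ)..1, x ^ (z - 1) * (1 - x) ^ (z - 1) := by
    rw [← intervalIntegral.integral_const_mul]
    refine intervalIntegral.integral_congr fun x hx => ?_
    rw [uIcc_of_le zero_le_one] at hx
    have hsq : 1 - (2 * x - 1) ^ 2 = 2 ^ 2 * (x * (1 - x)) := by ring
    simp only [hsq, mul_rpow (by norm_num : (0 : ℝ) ≤ 2 ^ 2) (mul_nonneg hx.1 (sub_nonneg.2 hx.2)),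
      mul_rpow hx.1 (sub_nonneg.2 hx.2), ← rpow_natCast_mul zero_le_two]
    norm_num
  have hpow : 2 * (2 : ℝ) ^ (2 * (z - 1)) * 2 ^ (1 - 2 * z) = 1 := by
    rw [mul_assoc, ← rpow_add two_pos, show 2 * (z - 1) + (1 - 2 * z) = (-1 : ℝ) by ring,
      rpow_neg_one]
    norm_num
  have hdup := Gamma_mul_Gamma_add_half_of_pos hz
  have hΓ' : 0 < Gamma (z + 1 / 2) := Gamma_pos_of_pos (by linarith)
  rw [hsubst, hfactor, integral_rpow_mul_one_sub_rpow_eq_Gamma hz hz, ← two_mul,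
    eq_div_iff hΓ'.ne']
  -- stops `field_simp` from rewriting the argument `z + 1 / 2`
  set G := Gamma (z + 1 / 2)
  field_simp
  linear_combination (2 * 2 ^ (2 * (z - 1))) * hdup + (Gamma (2 * z) * √π) * hpow

theorem integral_mul_one_sub_sq_rpow {p : ℝ} (hp : -1 < p) {h : ℝ} (hh : h ∈ Icc (-1 : ℝ) 1) :
    ∫ s in h..1, s * (1 - s ^ 2) ^ p = (1 - h ^ 2) ^ (p + 1) / (2 * (p + 1)) := by
  have hp1 : 0 < p + 1 := by linarith
  have hderiv : ∀ x ∈ Ioo h 1,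
      HasDerivAt (fun s : ℝ => -(1 - s ^ 2) ^ (p + 1) / (2 * (p + 1))) (x * (1 - x ^ 2) ^ p) x := by
    intro x hx
    have hpos : 0 < 1 - x ^ 2 := by nlinarith [hh.1, hx.1, hx.2]
    refine ((((hasDerivAt_pow 2 x).const_sub 1).rpow_const (p := p + 1)
      (Or.inl hpos.ne')).neg.div_const (2 * (p + 1))).congr_deriv ?_
    field_simp
    norm_num [mul_comm]
  rw [intervalIntegral.integral_eq_sub_of_hasDerivAt_of_le hh.2
    (by fun_prop (disch := positivity)) hderiv
    ((intervalIntegrable_one_sub_sq_rpow hp hh (by norm_num)).continuousOn_mul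
      continuousOn_id)]
  simp [zero_rpow hp1.ne']
  ring

theorem continuousOn_one_sub_sq_rpow_div_sq {z h : ℝ} (hz : 0 ≤ z) (h0 : 0 < h) :
    ContinuousOn (fun s : ℝ => (1 - s ^ 2) ^ z / s ^ 2) (Icc h 1) :=
  (ContinuousOn.rpow_const (by fun_prop) fun _ _ => Or.inr hz).div (by fun_prop)
    fun s hs => (pow_pos (h0.trans_le hs.1) 2).ne'

theorem two_mul_integral_one_sub_sq_rpow {z h : ℝ} (hz : 0 < z) (h0 : 0 < h) (h1 : h ≤ 1) :
    2 * z * ∫ s in h..1, (1 - s ^ 2) ^ (z - 1)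
      = (1 - h ^ 2) ^ z / h - ∫ s in h..1, (1 - s ^ 2) ^ z / s ^ 2 := by
  have hderiv : ∀ x ∈ Ioo h 1, HasDerivAt (fun s : ℝ => -(1 - s ^ 2) ^ z / s)
      (2 * z * (1 - x ^ 2) ^ (z - 1) + (1 - x ^ 2) ^ z / x ^ 2) x := by
    intro x hx
    have hx0 : 0 < x := h0.trans hx.1
    have hpos : 0 < 1 - x ^ 2 := by nlinarith [hx.2]
    refine ((((hasDerivAt_pow 2 x).const_sub 1).rpow_const (p := z)
      (Or.inl hpos.ne')).neg.div (hasDerivAt_id x) hx0.ne').congr_deriv ?_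
    have hsplit : (1 - x ^ 2) ^ z = (1 - x ^ 2) ^ (z - 1) * (1 - x ^ 2) := by
      rw [← rpow_add_one hpos.ne', sub_add_cancel]
    simp only [Pi.neg_apply, id]
    rw [hsplit]
    field_simp
    ring
  have hint : IntervalIntegrable (fun s : ℝ => (1 - s ^ 2) ^ (z - 1)) volume h 1 :=
    intervalIntegrable_one_sub_sq_rpow (by linarith) ⟨by linarith, h1⟩ (by norm_num)
  have hint' : IntervalIntegrable (fun s : ℝ => (1 - s ^ 2) ^ z / s ^ 2) volume h 1 :=
    (continuousOn_one_sub_sq_rpow_div_sq hz.le h0).intervalIntegrable_of_Icc h1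
  have hftc := intervalIntegral.integral_eq_sub_of_hasDerivAt_of_le h1
    ((ContinuousOn.rpow_const (by fun_prop) fun _ _ => Or.inr hz.le).neg.div continuousOn_id
      fun s hs => (h0.trans_le hs.1).ne')
    hderiv ((hint.const_mul (2 * z)).add hint')
  rw [intervalIntegral.integral_add (hint.const_mul (2 * z)) hint',
    intervalIntegral.integral_const_mul] at hftc
  norm_num [zero_rpow hz.ne', neg_div] at hftc
  linarith

theorem integral_one_sub_sq_rpow_div_sq_le {z h : ℝ} (hz : 0 ≤ z) (h0 : 0 < h) (h1 : h ≤ 1) :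
    ∫ s in h..1, (1 - s ^ 2) ^ z / s ^ 2 ≤ (1 - h ^ 2) ^ (z + 1) / (2 * (z + 1) * h ^ 3) := by
  calc ∫ s in h..1, (1 - s ^ 2) ^ z / s ^ 2
      ≤ ∫ s in h..1, s * (1 - s ^ 2) ^ z / h ^ 3 := by
        refine intervalIntegral.integral_mono_on h1
          ((continuousOn_one_sub_sq_rpow_div_sq hz h0).intervalIntegrable_of_Icc h1)
          (((intervalIntegrable_one_sub_sq_rpow (by linarith) ⟨by linarith, h1⟩
            (by norm_num)).continuousOn_mul continuousOn_id).div_const _) fun s hs => ?_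
        have hs0 : 0 < s := h0.trans_le hs.1
        have hpow : 0 ≤ (1 - s ^ 2) ^ z := rpow_nonneg (by nlinarith [hs.2]) z
        rw [div_le_div_iff₀ (by positivity) (by positivity)]
        have : h ^ 3 ≤ s ^ 3 := pow_le_pow_left₀ h0.le hs.1 3
        nlinarith [mul_le_mul_of_nonneg_left this hpow]
    _ = (1 - h ^ 2) ^ (z + 1) / (2 * (z + 1) * h ^ 3) := by
        rw [intervalIntegral.integral_div,
          integral_mul_one_sub_sq_rpow (by linarith) ⟨by linarith, h1⟩, div_div, mul_assoc]

theorem one_sub_sq_rpow_tail_bounds {z h : ℝ} (hz : 0 < z) (h0 : 0 < h) (h1 : h < 1) :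
    1 - (1 - h ^ 2) / (2 * h ^ 2 * (z + 1))
        ≤ h * (2 * z * ∫ s in h..1, (1 - s ^ 2) ^ (z - 1)) / (1 - h ^ 2) ^ z ∧
      h * (2 * z * ∫ s in h..1, (1 - s ^ 2) ^ (z - 1)) / (1 - h ^ 2) ^ z ≤ 1 := by
  have hP : 0 < (1 - h ^ 2) ^ z := rpow_pos_of_pos (by nlinarith) z
  rw [two_mul_integral_one_sub_sq_rpow hz h0 h1.le]
  set M := ∫ s in h..1, (1 - s ^ 2) ^ z / s ^ 2
  have hM0 : 0 ≤ M := intervalIntegral.integral_nonneg h1.le fun s hs =>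
    div_nonneg (rpow_nonneg (by nlinarith [hs.1, hs.2]) z) (sq_nonneg s)
  have hMle : M ≤ (1 - h ^ 2) ^ z * (1 - h ^ 2) / (2 * (z + 1) * h ^ 3) := by
    rw [← rpow_add_one (by nlinarith)]
    exact integral_one_sub_sq_rpow_div_sq_le hz.le h0 h1.le
  have hratio :
      h * ((1 - h ^ 2) ^ z / h - M) / (1 - h ^ 2) ^ z = 1 - h * M / (1 - h ^ 2) ^ z := by
    field_simp
  rw [hratio]
  constructor
  · have : h * M / (1 - h ^ 2) ^ z ≤ (1 - h ^ 2) / (2 * h ^ 2 * (z + 1)) := by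
      rw [div_le_div_iff₀ hP (by positivity)]
      rw [le_div_iff₀ (by positivity)] at hMle
      nlinarith
    linarith
  · have : 0 ≤ h * M / (1 - h ^ 2) ^ z := by positivity
    linarith

theorem F_ratio_bounds (z h : ℝ) (hz : 0 < z) (hh : h ∈ Set.Ioo (0:ℝ) 1)
    (c : ℝ) (hc : c = Real.Gamma (z + 1/2) / (2 * Real.sqrt π * Real.Gamma (z + 1)))
    (F : ℝ → ℝ) (hF : ∀ t ∈ Set.Icc (-1:ℝ) 1,
      F t = 2 * z * c * ∫ s in (-1:ℝ)..t, (1 - s^2) ^ (z - 1)) :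
    1 - (1 - h^2) / (2 * h^2 * (z + 1)) ≤ h * (1 - F h) / (c * (1 - h^2) ^ z) ∧
    h * (1 - F h) / (c * (1 - h^2) ^ z) ≤ 1 := by
  obtain ⟨h0, h1⟩ := hh
  have hc0 : 0 < c := by
    rw [hc]
    have := Gamma_pos_of_pos (by linarith : 0 < z + 1 / 2)
    have := Gamma_pos_of_pos (by linarith : 0 < z + 1)
    positivity
  have hF1 : F 1 = 1 := by
    rw [hF 1 ⟨by norm_num, le_rfl⟩, integral_one_sub_sq_rpow hz, hc, Gamma_add_one hz.ne']
    field_simp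
  have hint := fun b (hb : b ∈ Icc (-1 : ℝ) 1) =>
    intervalIntegrable_one_sub_sq_rpow (p := z - 1) (by linarith) ⟨le_rfl, by norm_num⟩ hb
  have htail : 1 - F h = c * (2 * z * ∫ s in h..1, (1 - s ^ 2) ^ (z - 1)) := by
    rw [show 1 - F h = F 1 - F h by rw [hF1], hF 1 ⟨by norm_num, le_rfl⟩,
      hF h ⟨by linarith, h1.le⟩, ← mul_sub,
      intervalIntegral.integral_interval_sub_left (hint 1 ⟨by norm_num, le_rfl⟩)
        (hint h ⟨by linarith, h1.le⟩)]
    ring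
  rw [htail, mul_left_comm h c, mul_div_mul_left _ _ hc0.ne']
  exact one_sub_sq_rpow_tail_bounds hz h0 h1
end
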